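/- Let d₁ ≥ d₂ ≥ ⋯ ≥ d_s be positive integers with Σᵢ(2^{dᵢ} − 1) = n. The multiset {d₁,…,d_s} equals the greedy almost binary partition of n if and only if d₁ > d₂ > ⋯ > d_{s−1} (i.e., only the smallest part may repeat, and at most twice). -/

import Mathlib

def nu (d : ℕ) : ℕ := 2 ^ d - 1

def IsABP (n : ℕ) (P : Multiset ℕ) : Prop :=
  (∀ i ∈ P, 1 ≤ i) ∧ (P.map nu).sum = n

noncomputable def tauP (n : ℕ) : ℕ :=
  sInf {k | ∃ P : Multiset ℕ, IsABP n P ∧ P.card = k}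

def IsSABP (n : ℕ) (P N : Multiset ℕ) : Prop :=
  (∀ i ∈ P, 1 ≤ i) ∧ (∀ j ∈ N, 1 ≤ j) ∧
    (n : ℤ) = ((P.map nu).sum : ℤ) - ((N.map nu).sum : ℤ)

noncomputable def tau (n : ℕ) : ℕ :=
  sInf {k | ∃ P N : Multiset ℕ, IsSABP n P N ∧ P.card + N.card = k}

noncomputable def tauC (n : ℕ) : ℕ :=
  sInf {k | ∃ (r : ℕ) (N : Multiset ℕ), IsSABP n {r} N ∧ 1 + N.card = k}

def greedy : ℕ → Multiset ℕ
  | 0 => 0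
  | (n+1) => Nat.log 2 (n+2) ::ₘ greedy (n + 1 - nu (Nat.log 2 (n+2)))
  decreasing_by
    have h1 : 0 < Nat.log 2 (n+2) := Nat.log_pos one_lt_two (by omega)
    have h2 : 2 ^ 1 ≤ 2 ^ Nat.log 2 (n+2) := Nat.pow_le_pow_right (by norm_num) h1
    simp only [nu] at *
    omega

open Classical in
noncomputable def dualf (n : ℕ) : ℕ :=
  if ∃ k : ℕ, 1 ≤ k ∧ n = 2 ^ k - 1 then n else 3 * 2 ^ Nat.log 2 n - n - 2

def parentT (v : ℕ × ℕ) : ℕ × ℕ := (v.1 + 1, v.2 / 2)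

def levelT (v : ℕ × ℕ) : ℕ := v.1 + 1

def treeGraph : SimpleGraph (ℕ × ℕ) where
  Adj u v := parentT u = v ∨ parentT v = u
  symm := by constructor; intro u v h; tauto
  loopless := by constructor; intro v h; simp [parentT, Prod.ext_iff] at h

noncomputable def cutCard (S : Finset (ℕ × ℕ)) : ℕ :=
  Set.ncard {v : ℕ × ℕ | ¬ ((v ∈ S) ↔ (parentT v ∈ S))}

def leafCount (S : Finset (ℕ × ℕ)) : ℕ := (S.filter (fun v => v.1 = 0)).card

def completeSubtree (v : ℕ × ℕ) : Finset (ℕ × ℕ) :=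
  (Finset.range (v.1 + 1)).biUnion (fun a =>
    (Finset.Ico (v.2 * 2 ^ (v.1 - a)) ((v.2 + 1) * 2 ^ (v.1 - a))).image (fun i => (a, i)))

def Bd (d : ℕ) : Finset (ℕ × ℕ) := completeSubtree (d - 1, 0)

def cutBd (d : ℕ) (X : Finset (ℕ × ℕ)) : ℕ :=
  ((Bd d).filter (fun v => v.1 + 1 < d ∧ ¬((v ∈ X) ↔ parentT v ∈ X))).card

noncomputable def deltaB (d i : ℕ) : ℕ :=
  sInf {c | ∃ X ⊆ Bd d, X.card = i ∧ cutBd d X = c}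

noncomputable def tauC0 (n : ℕ) : ℕ := if n = 0 then 0 else tauC n

def fS (S : Finset (ℕ × ℕ)) (v : ℕ × ℕ) : ℤ :=
  if v ∈ S ∧ parentT v ∉ S then 2 ^ levelT v - 1
  else if v ∉ S ∧ parentT v ∈ S then -(2 ^ levelT v - 1)
  else 0

/-! Write `L = log₂ (n + 1)`, so that `2^L - 1 ≤ n ≤ 2 (2^L - 1)`; the greedy partition takes `L`
first. A non-increasing list that repeats at most its last part and has head `d` sums to at most
`2 (2^d - 1)` (a geometric sum plus one extra copy of the last part), so its head is also
`log₂ (n + 1)`. Both directions then follow by removing the head and inducting on the list. -/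

lemma nu_succ (d : ℕ) : nu (d + 1) = 2 * nu d + 1 := by
  have : 1 ≤ 2 ^ d := Nat.one_le_two_pow
  simp only [nu, pow_succ]
  omega

lemma nu_mono : Monotone nu := fun _ _ h =>
  Nat.sub_le_sub_right (Nat.pow_le_pow_right two_pos h) 1

lemma nu_pos {d : ℕ} (hd : 0 < d) : 0 < nu d := by
  have : 2 ^ 1 ≤ 2 ^ d := Nat.pow_le_pow_right two_pos hd
  simp only [nu]
  omega

lemma log_succ_eq_iff {n d : ℕ} : Nat.log 2 (n + 1) = d ↔ nu d ≤ n ∧ n < nu (d + 1) := by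
  have : 1 ≤ 2 ^ d := Nat.one_le_two_pow
  have : 1 ≤ 2 ^ (d + 1) := Nat.one_le_two_pow
  rw [Nat.log_eq_iff (Or.inr ⟨one_lt_two, n.succ_ne_zero⟩), nu, nu]
  omega

lemma greedy_zero : greedy 0 = 0 := by
  rw [greedy]

lemma greedy_of_pos {n : ℕ} (hn : 0 < n) :
    greedy n = Nat.log 2 (n + 1) ::ₘ greedy (n - nu (Nat.log 2 (n + 1))) := by
  obtain ⟨m, rfl⟩ := Nat.exists_eq_add_of_lt hn
  rw [greedy]

lemma List.pairwise_dropLast_cons {α : Type*} {R : α → α → Prop} {a : α} {t : List α} :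
    (a :: t).dropLast.Pairwise R ↔ (∀ b ∈ t.dropLast, R a b) ∧ t.dropLast.Pairwise R := by
  by_cases ht : t = []
  · simp [ht]
  · rw [List.dropLast_cons_of_ne_nil ht, List.pairwise_cons]

lemma sum_nu_le_two_mul_nu {l : List ℕ} {D : ℕ} (hsort : l.Pairwise (· ≥ ·))
    (hstrict : l.dropLast.Pairwise (· > ·)) (hD : ∀ d ∈ l, d ≤ D) :
    (l.map nu).sum ≤ 2 * nu D := by
  match l, hsort, hstrict, hD with
  | [], _, _, _ => simp
  | [a], _, _, hD =>
    have := nu_mono (hD a (by simp))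
    simp only [List.map_cons, List.map_nil, List.sum_cons, List.sum_nil]
    omega
  | [a, b], _, _, hD =>
    have := nu_mono (hD a (by simp))
    have := nu_mono (hD b (by simp))
    simp only [List.map_cons, List.map_nil, List.sum_cons, List.sum_nil]
    omega
  | a :: b :: c :: r, hsort, hstrict, hD =>
    have hba : b < a := (List.pairwise_dropLast_cons.mp hstrict).1 b (by simp)
    obtain ⟨a, rfl⟩ := Nat.exists_eq_add_of_lt hba
    have htail : ((b :: c :: r).map nu).sum ≤ 2 * nu (b + a) :=
      sum_nu_le_two_mul_nu (List.pairwise_cons.mp hsort).2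
        (List.pairwise_dropLast_cons.mp hstrict).2 fun x hx => by
          rcases List.mem_cons.mp hx with rfl | hx
          · omega
          · have := (List.pairwise_cons.mp (List.pairwise_cons.mp hsort).2).1 x hx
            omega
    have := nu_mono (hD _ List.mem_cons_self)
    have := nu_succ (b + a)
    rw [List.map_cons, List.sum_cons]
    omega

lemma log_sum_nu_eq_head {d : ℕ} {t : List ℕ} (hsort : (d :: t).Pairwise (· ≥ ·))
    (hstrict : (d :: t).dropLast.Pairwise (· > ·)) :
    Nat.log 2 (nu d + (t.map nu).sum + 1) = d := by
  have hle := sum_nu_le_two_mul_nu hsort hstrict fun x hx => by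
    rcases List.mem_cons.mp hx with rfl | hx
    exacts [le_rfl, (List.pairwise_cons.mp hsort).1 x hx]
  have := nu_succ d
  rw [List.map_cons, List.sum_cons] at hle
  exact log_succ_eq_iff.mpr ⟨by omega, by omega⟩

theorem coe_eq_greedy_sum_nu_iff {l : List ℕ} (hsort : l.Pairwise (· ≥ ·))
    (hpos : ∀ d ∈ l, 1 ≤ d) :
    (↑l : Multiset ℕ) = greedy (l.map nu).sum ↔ l.dropLast.Pairwise (· > ·) := by
  induction l with
  | nil => simp [greedy_zero]
  | cons d t ih =>
    have htsort := (List.pairwise_cons.mp hsort).2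
    have hle_d : ∀ x ∈ t, x ≤ d := (List.pairwise_cons.mp hsort).1
    have ih := ih htsort fun x hx => hpos x (List.mem_cons_of_mem d hx)
    have hd : 0 < nu d := nu_pos (hpos d List.mem_cons_self)
    rw [List.map_cons, List.sum_cons]
    generalize hn : nu d + (t.map nu).sum = n
    obtain ⟨hLn, hnL⟩ := log_succ_eq_iff.mp (rfl : Nat.log 2 (n + 1) = _)
    rw [greedy_of_pos (by omega), ← Multiset.cons_coe]
    constructor
    · intro h
      have hdL : d = Nat.log 2 (n + 1) := by
        refine le_antisymm (not_lt.mp fun hlt => ?_) ?_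
        · have := nu_mono (show Nat.log 2 (n + 1) + 1 ≤ d from hlt)
          omega
        · rcases Multiset.mem_cons.mp (h.symm ▸ Multiset.mem_cons_self _ _) with h' | h'
          exacts [h'.le, hle_d _ (Multiset.mem_coe.mp h')]
      rw [← hdL, Multiset.cons_inj_right, show n - nu d = (t.map nu).sum by omega] at h
      refine List.pairwise_dropLast_cons.mpr ⟨?_, ih.mp h⟩
      match t, hle_d, hn with
      | [], _, _ => simp
      | [_], _, _ => simp
      | b :: c :: r, hle_d, hn =>
        -- a repeated head `b = d` would force `n ≥ 2 nu d + nu c > 2 nu d`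
        have hbd : b < d := by
          refine lt_of_le_of_ne (hle_d b List.mem_cons_self) fun hbd => ?_
          have := nu_pos (hpos c (by simp))
          have := nu_succ d
          simp only [List.map_cons, List.sum_cons, hbd, ← hdL] at hn hnL
          omega
        intro x hx
        rcases List.mem_cons.mp (List.dropLast_subset _ hx) with rfl | hx
        exacts [hbd, lt_of_le_of_lt ((List.pairwise_cons.mp htsort).1 x hx) hbd]
    · intro hstrict
      rw [← hn, log_sum_nu_eq_head hsort hstrict, Multiset.cons_inj_right,
        Nat.add_sub_cancel_left]
      exact ih.mpr (List.pairwise_dropLast_cons.mp hstrict).2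

theorem stmt3_general (n : ℕ) (l : List ℕ)
    (hsort : l.Pairwise (· ≥ ·)) (hpos : ∀ d ∈ l, 1 ≤ d)
    (hsum : (l.map nu).sum = n) :
    (↑l : Multiset ℕ) = greedy n ↔ l.dropLast.Pairwise (· > ·) :=
  hsum ▸ coe_eq_greedy_sum_nu_iff hsort hpos

theorem stmt3 (n : ℕ) (hn : 1 ≤ n) (l : List ℕ)
    (hsort : l.Pairwise (· ≥ ·)) (hpos : ∀ d ∈ l, 1 ≤ d)
    (hsum : (l.map nu).sum = n) :
    (↑l : Multiset ℕ) = greedy n ↔ l.dropLast.Pairwise (· > ·) :=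
  stmt3_general n l hsort hpos hsum
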